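/- Let e be a partition of odd size whose number of parts is odd. Then ∇(B-collapse of e) equals the C-collapse of ∇(e). In particular, the B-collapse of e has the same number of parts as e. -/
import Mathlib


/-!
Partitions (Young diagrams) are represented as antitone, eventually-zero
functions `f : ℕ → ℕ`, where `f i` is the length of the `(i+1)`-st row.
-/

/-- `f : ℕ → ℕ` represents a partition (Young diagram). -/
def IsPartition (f : ℕ → ℕ) : Prop :=
  Antitone f ∧ ∃ N, ∀ i, N ≤ i → f i = 0

/-- The size of a partition: the sum of its parts. -/
noncomputable def size (f : ℕ → ℕ) : ℕ := ∑' i, f i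

/-- The sum of the `k` largest parts of a partition. -/
def psum (f : ℕ → ℕ) (k : ℕ) : ℕ := ∑ i ∈ Finset.range k, f i

/-- The multiplicity with which `p` occurs as a part. -/
noncomputable def mult (f : ℕ → ℕ) (p : ℕ) : ℕ := {i | f i = p}.ncard

/-- The transpose (conjugate) partition: `transpose f i` is the length of the
`(i+1)`-st column of `f`. -/
noncomputable def transpose (f : ℕ → ℕ) : ℕ → ℕ := fun i => {j | i < f j}.ncard

/-- The number of parts of a partition (the length of its first column). -/
noncomputable def numParts (f : ℕ → ℕ) : ℕ := {j | 0 < f j}.ncard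

/-- Type B: odd size, and every (positive) even part occurs with even multiplicity. -/
def IsTypeB (f : ℕ → ℕ) : Prop :=
  IsPartition f ∧ Odd (size f) ∧ ∀ p, 0 < p → Even p → Even (mult f p)

/-- Type C: even size, and every odd part occurs with even multiplicity. -/
def IsTypeC (f : ℕ → ℕ) : Prop :=
  IsPartition f ∧ Even (size f) ∧ ∀ p, Odd p → Even (mult f p)

/-- Type D: even size, and every (positive) even part occurs with even multiplicity. -/
def IsTypeD (f : ℕ → ℕ) : Prop :=
  IsPartition f ∧ Even (size f) ∧ ∀ p, 0 < p → Even p → Even (mult f p)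

/-- Dominance order `f ≼ g` between partitions of the same size. -/
def Dom (f g : ℕ → ℕ) : Prop :=
  size f = size g ∧ ∀ k, psum f k ≤ psum g k

/-- `c` is the X-collapse of `d`, where predicate `T` expresses "type X": `c` is
the greatest type-X partition of the same size dominated by `d`. -/
def IsCollapse (T : (ℕ → ℕ) → Prop) (d c : ℕ → ℕ) : Prop :=
  T c ∧ Dom c d ∧ ∀ e, T e → Dom e d → Dom e c

open Classical in
/-- The X-collapse of `d` (junk value if it does not exist). -/
noncomputable def collapse (T : (ℕ → ℕ) → Prop) (d : ℕ → ℕ) : ℕ → ℕ :=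
  if h : ∃ c, IsCollapse T d c then h.choose else fun _ => 0

/-- The B-collapse. -/
noncomputable def collapseB : (ℕ → ℕ) → ℕ → ℕ := collapse IsTypeB

/-- The C-collapse. -/
noncomputable def collapseC : (ℕ → ℕ) → ℕ → ℕ := collapse IsTypeC

/-- The D-collapse. -/
noncomputable def collapseD : (ℕ → ℕ) → ℕ → ℕ := collapse IsTypeD

/-- `d⁺`: add one box to the first row. -/
def boxPlus (f : ℕ → ℕ) : ℕ → ℕ := fun i => if i = 0 then f 0 + 1 else f i

/-- `d⁻`: remove one box from the last row (for nonempty `d`). -/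
noncomputable def boxMinus (f : ℕ → ℕ) : ℕ → ℕ :=
  fun i => if i = numParts f - 1 then f i - 1 else f i

/-- `∇(d)`: remove the first column (every part decreased by 1). -/
def delCol (f : ℕ → ℕ) : ℕ → ℕ := fun i => f i - 1

/-- `∇̌(d)`: remove the first row (delete one largest part). -/
def delRow (f : ℕ → ℕ) : ℕ → ℕ := fun i => f (i + 1)

/-- The metaplectic Lusztig–Spaltenstein map: the D-collapse of the transpose. -/
noncomputable def mLS (d : ℕ → ℕ) : ℕ → ℕ := collapseD (transpose d)

/-- The map `d̃_SP`: the C-collapse of `(e⁺)⁻`. -/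
noncomputable def mSP (e : ℕ → ℕ) : ℕ → ℕ := collapseC (boxMinus (boxPlus e))

/-- The metaplectic Barbasch–Vogan duality. -/
noncomputable def mBV (d : ℕ → ℕ) : ℕ → ℕ := mSP (mLS d)

section Aux

lemma psum_succ (f : ℕ → ℕ) (k : ℕ) : psum f (k+1) = psum f k + f k :=
  Finset.sum_range_succ f k

lemma psum_mono (f : ℕ → ℕ) : Monotone (psum f) := by
  intro a b hab
  exact Finset.sum_le_sum_of_subset (Finset.range_subset_range.2 hab)

lemma eq_of_psum_eq {f g : ℕ → ℕ} (h : ∀ k, psum f k = psum g k) : f = g := by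
  funext i
  have h1 := h (i+1); have h2 := h i
  rw [psum_succ, psum_succ] at h1
  omega

lemma size_eq_psum {f : ℕ → ℕ} {N : ℕ} (hN : ∀ i, N ≤ i → f i = 0) :
    size f = psum f N := by
  apply tsum_eq_sum
  intro b hb
  exact hN b (by simpa using hb)

lemma psum_le_size {f : ℕ → ℕ} {N : ℕ} (hN : ∀ i, N ≤ i → f i = 0) (k : ℕ) :
    psum f k ≤ size f := by
  rw [size_eq_psum hN]
  rcases le_total k N with h | h
  · exact psum_mono f h
  · calc psum f k = psum f N + ∑ i ∈ Finset.Ico N k, f i := by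
          rw [psum, psum, ← Finset.sum_range_add_sum_Ico _ h]
        _ ≤ psum f N := by
          have : ∑ i ∈ Finset.Ico N k, f i = 0 :=
            Finset.sum_eq_zero fun i hi => hN i (Finset.mem_Ico.1 hi).1
          omega

lemma numParts_spec {f : ℕ → ℕ} {n : ℕ} (h : ∀ i, 0 < f i ↔ i < n) :
    numParts f = n := by
  have : {j | 0 < f j} = ↑(Finset.range n) := by
    ext j; simp [h j]
  rw [numParts, this, Set.ncard_coe_finset, Finset.card_range]

/-- For a partition, positivity is an initial segment. -/
lemma IsPartition.pos_iff {f : ℕ → ℕ} (hf : IsPartition f) (i : ℕ) :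
    0 < f i ↔ i < numParts f := by
  obtain ⟨hanti, N, hN⟩ := hf
  have hex : ∃ n, f n = 0 := ⟨N, hN N le_rfl⟩
  set n := Nat.find hex with hn
  have key : ∀ i, 0 < f i ↔ i < n := by
    intro i
    constructor
    · intro hi
      by_contra hni
      push_neg at hni
      have := hanti hni
      rw [Nat.find_spec hex] at this
      omega
    · intro hi
      have := Nat.find_min hex hi
      omega
  rw [numParts_spec key]
  exact key i

lemma IsPartition.zero_of_numParts_le {f : ℕ → ℕ} (hf : IsPartition f) {i : ℕ}
    (h : numParts f ≤ i) : f i = 0 := by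
  have := hf.pos_iff i
  omega

lemma IsPartition.size_eq_psum_numParts {f : ℕ → ℕ} (hf : IsPartition f) :
    size f = psum f (numParts f) :=
  size_eq_psum (fun i hi => hf.zero_of_numParts_le hi)

lemma IsPartition.size_eq_psum_of_le {f : ℕ → ℕ} (hf : IsPartition f) {k : ℕ}
    (h : numParts f ≤ k) : size f = psum f k :=
  size_eq_psum (fun i hi => hf.zero_of_numParts_le (le_trans h hi))

lemma IsPartition.psum_le_size' {f : ℕ → ℕ} (hf : IsPartition f) (k : ℕ) :
    psum f k ≤ size f :=
  psum_le_size (fun i hi => hf.zero_of_numParts_le hi) k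

/-- rows n..k-1 positive gives psum growth -/
lemma IsPartition.psum_add_le {f : ℕ → ℕ} (hf : IsPartition f) {n k : ℕ}
    (hnk : n ≤ k) (hk : k ≤ numParts f) : psum f n + (k - n) ≤ psum f k := by
  induction k with
  | zero =>
    have : n = 0 := by omega
    subst this; simp
  | succ k ih =>
    rcases Nat.lt_or_ge n (k+1) with h | h
    · have hk' : 0 < f k := (hf.pos_iff k).2 (by omega)
      rw [psum_succ]
      have := ih (by omega) (by omega)
      omega
    · have : n = k + 1 := by omega
      subst this; simp

lemma IsPartition.numParts_le_size {f : ℕ → ℕ} (hf : IsPartition f) :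
    numParts f ≤ size f := by
  have := hf.psum_add_le (Nat.zero_le (numParts f)) le_rfl
  have h2 := hf.psum_le_size' (numParts f)
  have h0 : psum f 0 = 0 := rfl
  omega

lemma mult_eq_card {f : ℕ → ℕ} {p N : ℕ} (h : ∀ i, N ≤ i → f i ≠ p) :
    mult f p = ((Finset.range N).filter (fun i => f i = p)).card := by
  have : {i | f i = p} = ↑((Finset.range N).filter (fun i => f i = p)) := by
    ext i
    simp only [Set.mem_setOf_eq, Finset.coe_filter, Finset.mem_range, Set.mem_setOf_eq]
    constructor
    · intro hi
      refine ⟨?_, hi⟩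
      by_contra hni
      exact h i (by omega) hi
    · tauto
  rw [mult, this, Set.ncard_coe_finset]

lemma Dom.trans {f g h : ℕ → ℕ} (h1 : Dom f g) (h2 : Dom g h) : Dom f h :=
  ⟨h1.1.trans h2.1, fun k => (h1.2 k).trans (h2.2 k)⟩

lemma Dom.refl (f : ℕ → ℕ) : Dom f f := ⟨rfl, fun _ => le_rfl⟩

lemma collapse_unique {T : (ℕ → ℕ) → Prop} {d c : ℕ → ℕ} (h : IsCollapse T d c) :
    collapse T d = c := by
  have hex : ∃ c', IsCollapse T d c' := ⟨c, h⟩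
  rw [collapse, dif_pos hex]
  have hs := hex.choose_spec
  set c' := hex.choose
  have h1 : Dom c' c := h.2.2 c' hs.1 hs.2.1
  have h2 : Dom c c' := hs.2.2 c h.1 h.2.1
  exact eq_of_psum_eq (fun k => le_antisymm (h1.2 k) (h2.2 k))

/-- Key fiber-counting lemma. -/
lemma fiber_count {f : ℕ → ℕ} (hf : IsPartition f) {a : ℕ}
    (hstrict : ∀ i, i < a → f a < f i) (p : ℕ → Prop) [DecidablePred p] :
    ((Finset.range a).filter (fun i => p (f i))).card
      = ∑ v ∈ ((Finset.range a).image f).filter p, mult f v := by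
  have hmem : ∀ x ∈ (Finset.range a).filter (fun i => p (f i)),
      f x ∈ ((Finset.range a).image f).filter p := by
    intro x hx
    simp only [Finset.mem_filter, Finset.mem_range] at hx ⊢
    exact ⟨Finset.mem_image_of_mem f (Finset.mem_range.2 hx.1), hx.2⟩
  rw [Finset.card_eq_sum_card_fiberwise hmem]
  apply Finset.sum_congr rfl
  intro v hv
  simp only [Finset.mem_filter, Finset.mem_image, Finset.mem_range] at hv
  obtain ⟨⟨i0, hi0a, hi0⟩, hpv⟩ := hv
  have hva : f a < v := hi0 ▸ hstrict i0 hi0a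
  -- the fiber is all of {i | f i = v}
  have hmult : mult f v = ((Finset.range a).filter (fun i => f i = v)).card := by
    apply mult_eq_card
    intro i hi hfi
    have : f i ≤ f a := hf.1 hi
    omega
  rw [hmult]
  congr 1
  ext i
  simp only [Finset.mem_filter, Finset.mem_range]
  constructor
  · rintro ⟨⟨hia, _⟩, hfi⟩; exact ⟨hia, hfi⟩
  · rintro ⟨hia, hfi⟩; exact ⟨⟨hia, hfi ▸ hpv⟩, hfi⟩

/-- Parity of a partial sum in terms of odd values with odd multiplicity. -/
lemma psum_parity {f : ℕ → ℕ} (hf : IsPartition f) {a : ℕ}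
    (hstrict : ∀ i, i < a → f a < f i) :
    (Even (psum f a) ↔
      Even ((((Finset.range a).image f).filter (fun v => Odd v ∧ Odd (mult f v))).card)) := by
  rw [psum, Finset.even_sum_iff_even_card_odd]
  rw [fiber_count hf hstrict Odd]
  rw [Finset.even_sum_iff_even_card_odd]
  rw [Finset.filter_filter]

/-- If all odd values above `f a` have even multiplicity, `psum f a` is even. -/
lemma psum_even {f : ℕ → ℕ} (hf : IsPartition f) {a : ℕ}
    (hstrict : ∀ i, i < a → f a < f i)
    (hmult : ∀ v, Odd v → f a < v → Even (mult f v)) :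
    Even (psum f a) := by
  rw [psum_parity hf hstrict]
  have : (((Finset.range a).image f).filter (fun v => Odd v ∧ Odd (mult f v))) = ∅ := by
    apply Finset.filter_false_of_mem
    intro v hv
    simp only [Finset.mem_image, Finset.mem_range] at hv
    obtain ⟨i0, hi0a, hi0⟩ := hv
    intro ⟨hodd, hm⟩
    have := hmult v hodd (hi0 ▸ hstrict i0 hi0a)
    exact (Nat.not_even_iff_odd.2 hm) this
  simp [this]

/-- Type C parity characterization (the needed direction). -/
lemma IsTypeC.step {c : ℕ → ℕ} (hc : IsTypeC c) {k : ℕ} (hk : 1 ≤ k)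
    (hodd : Odd (psum c k)) : c (k-1) = c k := by
  by_contra hne
  have hlt : c k < c (k-1) := by
    have := hc.1.1 (show k - 1 ≤ k by omega)
    omega
  have hstrict : ∀ i, i < k → c k < c i := by
    intro i hi
    have := hc.1.1 (show i ≤ k - 1 by omega)
    omega
  have := psum_even hc.1 hstrict (fun v hv _ => hc.2.2 v hv)
  exact (Nat.not_even_iff_odd.2 hodd) this
lemma sum_Ico_const {d : ℕ → ℕ} {a b v : ℕ} (hab : a ≤ b)
    (h : ∀ i, a ≤ i → i < b → d i = v) :
    psum d b = psum d a + (b - a) * v := by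
  have := Finset.sum_range_add_sum_Ico d hab
  have h2 : ∑ i ∈ Finset.Ico a b, d i = (b - a) * v := by
    calc ∑ i ∈ Finset.Ico a b, d i = ∑ _i ∈ Finset.Ico a b, v :=
          Finset.sum_congr rfl (fun i hi => by
            rw [Finset.mem_Ico] at hi; exact h i hi.1 hi.2)
      _ = (b - a) * v := by simp [Finset.sum_const, Nat.card_Ico]
  rw [psum, psum, ← this, h2]

lemma move {d : ℕ → ℕ} (hd : IsPartition d) (hev : Even (size d))
    (hnc : ¬ ∀ p, Odd p → Even (mult d p)) :
    ∃ d', IsPartition d' ∧ size d' = size d ∧ numParts d' = numParts d ∧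
      (∀ k, psum d' k ≤ psum d k) ∧ (∃ k, k ≤ size d ∧ psum d' k < psum d k) ∧
      (∀ c, IsTypeC c → Dom c d → Dom c d') := by
  classical
  push_neg at hnc
  obtain ⟨p0, hp0odd, hp0m⟩ := hnc
  rw [Nat.not_even_iff_odd] at hp0m
  set P : ℕ → Prop := fun v => Odd v ∧ Odd (mult d v) with hP
  -- p0 is a part
  have hpart : ∀ v, Odd (mult d v) → ∃ i, d i = v := by
    intro v hv
    have : {i | d i = v}.ncard ≠ 0 := by
      intro h0; rw [mult, h0] at hv; simp at hv
    have hne : {i | d i = v}.Nonempty := by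
      by_contra hemp
      rw [Set.not_nonempty_iff_eq_empty] at hemp
      rw [hemp] at this; simp at this
    exact hne
  obtain ⟨ip, hip⟩ := hpart p0 hp0m
  have hp0le : p0 ≤ d 0 := hip ▸ hd.1 (Nat.zero_le ip)
  set q := Nat.findGreatest P (d 0) with hq
  have hqP : P q := Nat.findGreatest_spec hp0le ⟨hp0odd, hp0m⟩
  obtain ⟨hqodd, hqm⟩ := hqP
  have hqmax : ∀ v, Odd v → q < v → Even (mult d v) := by
    intro v hvodd hqv
    by_cases hvle : v ≤ d 0
    · have := Nat.findGreatest_is_greatest (P := P) hqv hvle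
      rw [hP] at this
      simp only [not_and] at this
      have := this hvodd
      rw [Nat.not_odd_iff_even] at this; exact this
    · have : {i | d i = v} = ∅ := by
        ext i; simp only [Set.mem_setOf_eq, Set.mem_empty_iff_false, iff_false]
        intro hdi
        have := hd.1 (Nat.zero_le i)
        omega
      rw [mult, this]; simp
  obtain ⟨N, hN⟩ := hd.2
  have hq1 : 1 ≤ q := hqodd.pos
  -- a: start of the q-block, b: end
  have ha_ex : ∃ i, d i ≤ q := ⟨N, by rw [hN N le_rfl]; omega⟩
  have hb_ex : ∃ i, d i < q := ⟨N, by rw [hN N le_rfl]; omega⟩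
  set a := Nat.find ha_ex with ha
  set b := Nat.find hb_ex with hb
  have hda_le : d a ≤ q := Nat.find_spec ha_ex
  have hdb : d b < q := Nat.find_spec hb_ex
  have hlt_a : ∀ i, i < a → q < d i := by
    intro i hi; have := Nat.find_min ha_ex hi; omega
  have hlt_b : ∀ i, i < b → q ≤ d i := by
    intro i hi; have := Nat.find_min hb_ex hi; omega
  obtain ⟨i0, hi0⟩ := hpart q hqm
  have hai0 : a ≤ i0 := Nat.find_min' ha_ex (le_of_eq hi0)
  have hda : d a = q := le_antisymm hda_le (hi0 ▸ hd.1 hai0)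
  have hab : a < b := by
    rcases Nat.lt_or_ge a b with h | h
    · exact h
    · exfalso; rcases Nat.eq_or_lt_of_le h with h' | h'
      · rw [h'] at hdb; omega
      · have := hlt_a b h'; omega
  have hblock : ∀ i, a ≤ i → i < b → d i = q := by
    intro i h1 h2
    have := hd.1 h1
    have := hlt_b i h2
    omega
  have hmultq : mult d q = b - a := by
    rw [mult_eq_card (N := b) (fun i hi hdi => by have := hd.1 hi; omega)]
    have : (Finset.range b).filter (fun i => d i = q) = Finset.Ico a b := by
      ext i
      simp only [Finset.mem_filter, Finset.mem_range, Finset.mem_Ico]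
      constructor
      · rintro ⟨h1, h2⟩
        exact ⟨Nat.find_min' ha_ex (le_of_eq h2), h1⟩
      · rintro ⟨h1, h2⟩
        exact ⟨h2, hblock i h1 h2⟩
    rw [this, Nat.card_Ico]
  have hpsa : Even (psum d a) := by
    apply psum_even hd (fun i hi => by rw [hda]; exact hlt_a i hi)
    intro v hv hav
    exact hqmax v hv (hda ▸ hav)
  have hpsb : psum d b = psum d a + (b - a) * q :=
    sum_Ico_const (le_of_lt hab) hblock
  have hoddb : Odd (psum d b) := by
    obtain ⟨r, hr⟩ := hpsa
    rw [hmultq] at hqm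
    obtain ⟨s, hs⟩ := hqm
    obtain ⟨t, ht⟩ := hqodd
    refine ⟨r + (2*s*t + s + t), ?_⟩
    rw [hpsb, hr, hs, ht]; ring
  have hq3 : 3 ≤ q := by
    by_contra hq3
    have hq1' : q = 1 := by
      obtain ⟨t, ht⟩ := hqodd; omega
    have hdb0 : d b = 0 := by omega
    have : size d = psum d b :=
      size_eq_psum (fun i hi => by have := hd.1 hi; omega)
    rw [this] at hev
    exact (Nat.not_even_iff_odd.2 hoddb) hev
  -- second violation v < q
  set np := numParts d with hnp
  have hdnp : d np = 0 := hd.zero_of_numParts_le le_rfl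
  have hstnp : ∀ i, i < np → d np < d i := by
    intro i hi; rw [hdnp]; exact (hd.pos_iff i).2 hi
  have hWeven := (psum_parity hd hstnp).1 (by rw [← hd.size_eq_psum_numParts]; exact hev)
  set W := ((Finset.range np).image d).filter (fun v => Odd v ∧ Odd (mult d v)) with hW
  have hqW : q ∈ W := by
    rw [hW]
    simp only [Finset.mem_filter, Finset.mem_image, Finset.mem_range]
    refine ⟨⟨i0, ?_, hi0⟩, hqodd, hqm⟩
    rw [← hd.pos_iff i0, hi0]; omega
  have hexv : ∃ v ∈ W, v ≠ q := by
    by_contra hno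
    push_neg at hno
    have : W = {q} := by
      apply Finset.eq_singleton_iff_unique_mem.2
      exact ⟨hqW, hno⟩
    rw [this] at hWeven
    simp at hWeven
  obtain ⟨v, hvW, hvq⟩ := hexv
  rw [hW] at hvW
  simp only [Finset.mem_filter, Finset.mem_image, Finset.mem_range] at hvW
  obtain ⟨⟨i1, hi1np, hi1⟩, hvodd, hvm⟩ := hvW
  have hvlt : v < q := by
    rcases Nat.lt_or_ge v q with h | h
    · exact h
    · exfalso
      rcases Nat.eq_or_lt_of_le h with h' | h'
      · exact hvq h'.symm
      · exact (Nat.not_even_iff_odd.2 hvm) (hqmax v hvodd h')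
  have hvq2 : v ≤ q - 2 := by
    obtain ⟨s, hs⟩ := hvodd; obtain ⟨t, ht⟩ := hqodd; omega
  have hv1 : 1 ≤ v := hvodd.pos
  -- l : first row with d l ≤ q - 2
  have hl_ex : ∃ i, d i ≤ q - 2 := ⟨i1, by omega⟩
  set l := Nat.find hl_ex with hl
  have hdl_le : d l ≤ q - 2 := Nat.find_spec hl_ex
  have hlt_l : ∀ i, i < l → q - 1 ≤ d i := by
    intro i hi; have := Nat.find_min hl_ex hi; omega
  have hbl : b ≤ l := by
    rcases Nat.lt_or_ge l b with h | h
    · have := hlt_b l h; omega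
    · exact h
  have hli1 : l ≤ i1 := Nat.find_min' hl_ex (by omega)
  have hdl_pos : 1 ≤ d l := by
    have := hd.1 hli1; omega
  have hmid : ∀ i, b ≤ i → i < l → d i = q - 1 := by
    intro i h1 h2
    have h3 := hlt_l i h2
    have h4 := hd.1 h1
    omega
  have hb1 : 1 ≤ b := by omega
  have hdb1 : d (b-1) = q := hblock (b-1) (by omega) (by omega)
  -- the move
  set d' : ℕ → ℕ := fun i => if i = b - 1 then d i - 1 else if i = l then d i + 1 else d i
    with hd'
  have hd'b1 : d' (b-1) = q - 1 := by rw [hd']; simp [hdb1]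
  have hlb1 : b - 1 ≠ l := by omega
  have hd'l : d' l = d l + 1 := by rw [hd']; simp [Ne.symm hlb1]
  have hd'other : ∀ i, i ≠ b - 1 → i ≠ l → d' i = d i := by
    intro i h1 h2; rw [hd']; simp [h1, h2]
  -- antitone
  have hanti : Antitone d' := by
    apply antitone_nat_of_succ_le
    intro i
    have hstep : d (i+1) ≤ d i := hd.1 (Nat.le_succ i)
    by_cases h1 : i = b - 1
    · subst h1
      rw [hd'b1, show b - 1 + 1 = b by omega]
      by_cases h2 : b = l
      · rw [show d' b = d b + 1 by rw [← h2] at hd'l; exact hd'l]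
        have : d b ≤ q - 2 := by rw [h2]; exact hdl_le
        omega
      · rw [hd'other b (by omega) h2]
        omega
    · by_cases h2 : i = l
      · subst h2
        rw [hd'l, hd'other (l+1) (by omega) (by omega)]
        have := hd.1 (Nat.le_succ l)
        omega
      · rw [hd'other i h1 h2]
        by_cases h3 : i + 1 = b - 1
        · rw [show d' (i+1) = d (i+1) - 1 by rw [hd']; simp [h3]]
          omega
        · by_cases h4 : i + 1 = l
          · rw [h4, hd'l]
            have hbi : b ≤ i := by omega
            have := hmid i hbi (by omega)
            have := hlt_b  -- unused
            have hdi1 : d (i+1) ≤ q - 2 := by rw [h4]; exact hdl_le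
            omega
          · rw [hd'other (i+1) h3 h4]
            exact hstep
  have hpart' : IsPartition d' := by
    refine ⟨hanti, max N (l+1), fun i hi => ?_⟩
    rw [hd'other i (by omega) (by omega)]
    exact hN i (by omega)
  -- psum relation
  have hclaim : ∀ j, psum d' j + (if b ≤ j ∧ j ≤ l then 1 else 0) = psum d j := by
    intro j
    induction j with
    | zero =>
      rw [show psum d' 0 = 0 from rfl, show psum d 0 = 0 from rfl, if_neg (by omega)]
    | succ j ih =>
      rw [psum_succ, psum_succ]
      by_cases h1 : j = b - 1
      · have e1 : d' j = d j - 1 := by rw [hd']; simp [h1]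
        have e2 : d j = q := by rw [h1]; exact hdb1
        rw [if_neg (show ¬(b ≤ j ∧ j ≤ l) by omega)] at ih
        rw [if_pos (show b ≤ j + 1 ∧ j + 1 ≤ l by omega)]
        omega
      · by_cases h2 : j = l
        · have e1 : d' j = d j + 1 := by rw [h2]; exact hd'l
          rw [if_pos (show b ≤ j ∧ j ≤ l by omega)] at ih
          rw [if_neg (show ¬(b ≤ j + 1 ∧ j + 1 ≤ l) by omega)]
          omega
        · have e1 : d' j = d j := hd'other j h1 h2
          have e2 : (if b ≤ j + 1 ∧ j + 1 ≤ l then 1 else 0)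
              = (if b ≤ j ∧ j ≤ l then 1 else 0) := by
            split_ifs <;> omega
          rw [e2]
          omega
  have hple : ∀ k, psum d' k ≤ psum d k := by
    intro k; have := hclaim k; split_ifs at this <;> omega
  -- size
  have hsize' : size d' = size d := by
    set K := max (max N (l+1)) (l+1) with hK
    have h1 : size d' = psum d' K := size_eq_psum (fun i hi => by
      rw [hd'other i (by omega) (by omega)]; exact hN i (by omega))
    have h2 : size d = psum d K := size_eq_psum (fun i hi => hN i (by omega))
    have h3 := hclaim K
    rw [if_neg (show ¬(b ≤ K ∧ K ≤ l) by omega)] at h3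
    omega
  -- numParts
  have hnp' : numParts d' = np := by
    apply numParts_spec
    intro i
    rw [← hd.pos_iff i]
    by_cases h1 : i = b - 1
    · subst h1; rw [hd'b1, hdb1]; omega
    · by_cases h2 : i = l
      · subst h2; rw [hd'l]; omega
      · rw [hd'other i h1 h2]
  -- strictness at b
  have hstrictb : psum d' b < psum d b := by
    have := hclaim b
    rw [if_pos ⟨le_rfl, hbl⟩] at this
    omega
  have hbsize : b ≤ size d := by
    have h1 : b - 1 < np := by
      rw [← hd.pos_iff (b-1)] at *
      omega
    have := hd.numParts_le_size
    omega
  -- maximality preservation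
  have hmax : ∀ c, IsTypeC c → Dom c d → Dom c d' := by
    intro c hc hdom
    have strict : ∀ j, b ≤ j → j ≤ l → psum c j < psum d j := by
      intro j
      induction j using Nat.strong_induction_on with
      | _ j IH =>
        intro hbj hjl
        rcases lt_or_eq_of_le (hdom.2 j) with hlt | heq
        · exact hlt
        exfalso
        -- psum d j is odd
        have hmid' : ∀ i, b ≤ i → i < j → d i = q - 1 := fun i h1 h2 =>
          hmid i h1 (by omega)
        have hpsj : psum d j = psum d b + (j - b) * (q - 1) := sum_Ico_const hbj hmid'
        have hoddj : Odd (psum d j) := by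
          obtain ⟨r, hr⟩ := hoddb
          obtain ⟨t, ht⟩ := hqodd
          refine ⟨r + (j - b) * t, ?_⟩
          rw [hpsj, hr]
          have : q - 1 = 2 * t := by omega
          rw [this]; ring
        have hcstep : c (j-1) = c j := hc.step (by omega) (heq ▸ hoddj)
        -- c (j-1) ≥ q
        have hpcj : psum c j = psum c (j-1) + c (j-1) := by
          have := psum_succ c (j-1)
          rw [show j - 1 + 1 = j by omega] at this
          exact this
        have hpdj : psum d j = psum d (j-1) + d (j-1) := by
          have := psum_succ d (j-1)
          rw [show j - 1 + 1 = j by omega] at this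
          exact this
        have hcq : q ≤ c (j-1) := by
          rcases Nat.eq_or_lt_of_le hbj with hjb | hjb
          · -- j = b
            have h5 : psum c (j-1) ≤ psum d (j-1) := hdom.2 (j-1)
            have h6 : d (j-1) = q := by rw [hjb] at hdb1; exact hdb1
            omega
          · have h5 : psum c (j-1) < psum d (j-1) := IH (j-1) (by omega) (by omega) (by omega)
            have h6 : d (j-1) = q - 1 := hmid' (j-1) (by omega) (by omega)
            omega
        -- contradiction at j+1
        have h7 : psum c (j+1) ≤ psum d (j+1) := hdom.2 (j+1)
        have h8 : psum c (j+1) = psum c j + c j := psum_succ c j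
        have h9 : psum d (j+1) = psum d j + d j := psum_succ d j
        have h10 : d j < q := by
          have := hd.1 hbj
          omega
        omega
    refine ⟨hdom.1.trans hsize'.symm, fun k => ?_⟩
    have := hclaim k
    by_cases hk : b ≤ k ∧ k ≤ l
    · rw [if_pos hk] at this
      have := strict k hk.1 hk.2
      omega
    · rw [if_neg hk] at this
      have := hdom.2 k
      omega
  exact ⟨d', hpart', hsize', hnp', hple, ⟨b, hbsize, hstrictb⟩, hmax⟩
lemma existsC_aux (n : ℕ) : ∀ (d : ℕ → ℕ), IsPartition d → Even (size d) →
    (∑ k ∈ Finset.range (size d + 1), psum d k) ≤ n →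
    ∃ c, IsCollapse IsTypeC d c ∧ numParts c = numParts d := by
  induction n using Nat.strong_induction_on with
  | _ n IH =>
    intro d hd hev hPhi
    by_cases htc : ∀ p, Odd p → Even (mult d p)
    · exact ⟨d, ⟨⟨hd, hev, htc⟩, Dom.refl d, fun e _ hde => hde⟩, rfl⟩
    · obtain ⟨d', hp', hs', hn', hple, ⟨k0, hk0, hstr⟩, hmax⟩ := move hd hev htc
      have hPhi' : (∑ k ∈ Finset.range (size d' + 1), psum d' k) < n := by
        rw [hs']
        calc ∑ k ∈ Finset.range (size d + 1), psum d' k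
            < ∑ k ∈ Finset.range (size d + 1), psum d k :=
              Finset.sum_lt_sum (fun i _ => hple i)
                ⟨k0, Finset.mem_range.2 (by omega), hstr⟩
          _ ≤ n := hPhi
      obtain ⟨c, hc, hnc⟩ := IH _ hPhi' d' hp' (by rw [hs']; exact hev) le_rfl
      refine ⟨c, ⟨hc.1, hc.2.1.trans ⟨hs', hple⟩,
        fun e he hde => hc.2.2 e he (hmax e he hde)⟩, by rw [hnc, hn']⟩

lemma existsC {d : ℕ → ℕ} (hd : IsPartition d) (hev : Even (size d)) :
    ∃ c, IsCollapse IsTypeC d c ∧ numParts c = numParts d :=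
  existsC_aux _ d hd hev le_rfl
lemma IsPartition.delCol {f : ℕ → ℕ} (hf : IsPartition f) : IsPartition (delCol f) := by
  obtain ⟨hanti, N, hN⟩ := hf
  refine ⟨fun i j hij => Nat.sub_le_sub_right (hanti hij) 1, N, fun i hi => ?_⟩
  simp [_root_.delCol, hN i hi]

lemma psum_delCol {f : ℕ → ℕ} (hf : IsPartition f) (k : ℕ) :
    psum (delCol f) k + min k (numParts f) = psum f k := by
  induction k with
  | zero => simp [psum]
  | succ k ih =>
    rw [psum_succ, psum_succ]
    have hpos := hf.pos_iff k
    rcases Nat.lt_or_ge k (numParts f) with h | h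
    · have h1 : 0 < f k := hpos.2 h
      have h2 : delCol f k = f k - 1 := rfl
      omega
    · have h1 : f k = 0 := hf.zero_of_numParts_le h
      have h2 : delCol f k = f k - 1 := rfl
      omega

lemma numParts_delCol_le {f : ℕ → ℕ} (hf : IsPartition f) :
    numParts (delCol f) ≤ numParts f := by
  by_contra hcon
  push_neg at hcon
  have h1 : 0 < delCol f (numParts f) := (hf.delCol.pos_iff _).2 hcon
  have h2 : f (numParts f) = 0 := hf.zero_of_numParts_le le_rfl
  have : delCol f (numParts f) = f (numParts f) - 1 := rfl
  omega

lemma size_delCol {f : ℕ → ℕ} (hf : IsPartition f) :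
    size (delCol f) + numParts f = size f := by
  have h1 : size (delCol f) = psum (delCol f) (numParts f) :=
    hf.delCol.size_eq_psum_of_le (numParts_delCol_le hf)
  have h2 := psum_delCol hf (numParts f)
  have h3 := hf.size_eq_psum_numParts
  simp only [min_self] at h2
  omega

lemma mult_delCol {f : ℕ → ℕ} {v : ℕ} (hv : 1 ≤ v) :
    mult (delCol f) v = mult f (v + 1) := by
  have : {i | delCol f i = v} = {i | f i = v + 1} := by
    ext i
    show f i - 1 = v ↔ f i = v + 1
    omega
  rw [mult, mult, this]

/-- The number of parts of a type B partition is odd. -/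
lemma IsTypeB.numParts_odd {b : ℕ → ℕ} (hb : IsTypeB b) : Odd (numParts b) := by
  classical
  set np := numParts b with hnp
  have hbnp : b np = 0 := hb.1.zero_of_numParts_le le_rfl
  have hstrict : ∀ i, i < np → b np < b i := by
    intro i hi; rw [hbnp]; exact (hb.1.pos_iff i).2 hi
  have hoddsize : Odd (psum b np) := by
    rw [← hb.1.size_eq_psum_numParts]; exact hb.2.1
  have hS : Odd ((Finset.range np).filter (fun i => Odd (b i))).card := by
    rw [← Finset.odd_sum_iff_odd_card_odd]; exact hoddsize
  have hT : Even ((Finset.range np).filter (fun i => ¬ Odd (b i))).card := by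
    rw [fiber_count hb.1 hstrict (fun v => ¬ Odd v)]
    apply Finset.even_sum
    intro v hv
    simp only [Finset.mem_filter, Finset.mem_image, Finset.mem_range] at hv
    obtain ⟨⟨i0, hi0np, hi0⟩, hnotodd⟩ := hv
    have hpos : 0 < v := by
      rw [← hi0]; exact (hb.1.pos_iff i0).2 hi0np
    exact hb.2.2 v hpos (Nat.not_odd_iff_even.1 hnotodd)
  have hsum := Finset.card_filter_add_card_filter_not
    (s := Finset.range np) (fun i => Odd (b i))
  rw [Finset.card_range] at hsum
  obtain ⟨x, hx⟩ := hS
  obtain ⟨y, hy⟩ := hT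
  exact ⟨x + y, by omega⟩

lemma IsTypeB.delCol_typeC {b : ℕ → ℕ} (hb : IsTypeB b) : IsTypeC (delCol b) := by
  refine ⟨hb.1.delCol, ?_, ?_⟩
  · have h1 := size_delCol hb.1
    obtain ⟨x, hx⟩ := hb.2.1
    obtain ⟨y, hy⟩ := hb.numParts_odd
    exact ⟨(x - y), by omega⟩
  · intro p hp
    rw [mult_delCol hp.pos]
    refine hb.2.2 (p+1) (by omega) ?_
    obtain ⟨t, ht⟩ := hp
    exact ⟨t+1, by omega⟩

/-- Padding lemma: a type C partition weakly below `f` psum-wise can be extended to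
one dominated by `f` with the same (or larger) partial sums. -/
lemma pad {f g : ℕ → ℕ} (hf : IsPartition f) (hfev : Even (size f)) (hg : IsTypeC g)
    (hle : ∀ k, psum g k ≤ psum f k) :
    ∃ g', IsTypeC g' ∧ Dom g' f ∧ ∀ k, psum g k ≤ psum g' k := by
  classical
  set n := numParts g with hn
  have hgsz : size g ≤ size f := by
    have h1 : size g = psum g n := hg.1.size_eq_psum_numParts
    have h2 := hle n
    have h3 := hf.psum_le_size' n
    omega
  set Δ := size f - size g with hΔ
  have hΔeven : Even Δ := by
    obtain ⟨x, hx⟩ := hg.2.1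
    obtain ⟨y, hy⟩ := hfev
    exact ⟨y - x, by omega⟩
  set g' : ℕ → ℕ := fun i => if i < n then g i else if i < n + Δ then 1 else 0 with hg'
  have hv1 : ∀ j, j < n → g' j = g j := fun j hj => if_pos hj
  have hv2 : ∀ j, n ≤ j → j < n + Δ → g' j = 1 := fun j h1 h2 => by
    rw [hg']; simp only []; rw [if_neg (by omega), if_pos h2]
  have hv3 : ∀ j, n + Δ ≤ j → g' j = 0 := fun j h => by
    rw [hg']; simp only []; rw [if_neg (by omega), if_neg (by omega)]
  have hgpos := fun i => hg.1.pos_iff i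
  have hanti : Antitone g' := by
    apply antitone_nat_of_succ_le
    intro i
    rcases Nat.lt_or_ge (i+1) n with h1 | h1
    · rw [hv1 _ h1, hv1 _ (by omega)]
      exact hg.1.1 (Nat.le_succ i)
    · rcases Nat.lt_or_ge i n with h2 | h2
      · -- i + 1 = n
        rw [hv1 _ h2]
        have hp : 0 < g i := (hgpos i).2 (by rw [← hn]; omega)
        rcases Nat.lt_or_ge (i+1) (n + Δ) with h3 | h3
        · rw [hv2 _ (by omega) h3]; omega
        · rw [hv3 _ (by omega)]; omega
      · rcases Nat.lt_or_ge (i+1) (n + Δ) with h3 | h3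
        · rw [hv2 _ (by omega) h3, hv2 _ h2 (by omega)]
        · rw [hv3 _ (by omega)]; omega
  have hpart' : IsPartition g' := ⟨hanti, n + Δ, fun i hi => hv3 i hi⟩
  have hpos' : ∀ i, 0 < g' i ↔ i < n + Δ := by
    intro i
    rcases Nat.lt_or_ge i n with h | h
    · rw [hv1 _ h]
      have := (hgpos i).2 (by rw [← hn]; omega)
      constructor
      · intro _; omega
      · intro _; omega
    · rcases Nat.lt_or_ge i (n + Δ) with h2 | h2
      · rw [hv2 _ h h2]; omega
      · rw [hv3 _ h2]; omega
  have hnp' : numParts g' = n + Δ := numParts_spec hpos'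
  have hpsum_eq : ∀ k, k ≤ n → psum g' k = psum g k := by
    intro k hk
    apply Finset.sum_congr rfl
    intro i hi
    rw [Finset.mem_range] at hi
    exact hv1 i (by omega)
  have hpsn : psum g' n = size g := by
    rw [hpsum_eq n le_rfl, ← hg.1.size_eq_psum_numParts]
  have hsize' : size g' = size f := by
    have h1 : size g' = psum g' (n + Δ) := hpart'.size_eq_psum_of_le (by rw [hnp'])
    have h2 : psum g' (n + Δ) = psum g' n + (n + Δ - n) * 1 :=
      sum_Ico_const (by omega) (fun i hi1 hi2 => hv2 i hi1 hi2)
    omega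
  have hgk_const : ∀ k, n ≤ k → psum g k = size g := by
    intro k hk
    rw [hg.1.size_eq_psum_of_le (k := k) (by omega)]
  have hub : ∀ k, n ≤ k → psum g' k ≤ size g + (k - n) := by
    intro k hk
    have h2 : psum g' k = psum g' n + ∑ i ∈ Finset.Ico n k, g' i := by
      rw [psum, psum, Finset.sum_range_add_sum_Ico _ hk]
    have h3 : ∑ i ∈ Finset.Ico n k, g' i ≤ ∑ _i ∈ Finset.Ico n k, 1 := by
      apply Finset.sum_le_sum
      intro i hi
      rw [Finset.mem_Ico] at hi
      rcases Nat.lt_or_ge i (n + Δ) with h | h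
      · rw [hv2 i hi.1 h]
      · rw [hv3 i h]; omega
    have h4 : ∑ _i ∈ Finset.Ico n k, (1:ℕ) = k - n := by
      simp [Finset.sum_const, Nat.card_Ico]
    omega
  have hdom : Dom g' f := by
    refine ⟨hsize', fun k => ?_⟩
    rcases Nat.lt_or_ge k n with h | h
    · rw [hpsum_eq k (by omega)]; exact hle k
    · rcases le_or_gt k (numParts f) with h2 | h2
      · have h3 := hub k h
        have h4 := hf.psum_add_le h h2
        have h5 : size g = psum g n := hg.1.size_eq_psum_numParts
        have h6 := hle n
        omega
      · have h3 := hpart'.psum_le_size' k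
        have h4 : size f = psum f k := hf.size_eq_psum_of_le (by omega)
        omega
  have hge : ∀ k, psum g k ≤ psum g' k := by
    intro k
    rcases Nat.lt_or_ge k n with h | h
    · rw [hpsum_eq k (by omega)]
    · have h1 := hgk_const k h
      have h2 : psum g' n ≤ psum g' k := psum_mono g' h
      omega
  -- type C
  have htc : IsTypeC g' := by
    refine ⟨hpart', by rw [hsize']; exact hfev, ?_⟩
    intro p hp
    rcases Nat.eq_or_lt_of_le hp.pos with h1 | h1
    · -- p = 1
      have hp1 : p = 1 := h1.symm
      subst hp1
      have hm' : mult g' 1 = ((Finset.range (n + Δ)).filter (fun i => g' i = 1)).card :=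
        mult_eq_card (fun i hi => by rw [hv3 i hi]; omega)
      have hmg : mult g 1 = ((Finset.range n).filter (fun i => g i = 1)).card :=
        mult_eq_card (fun i hi => by
          have : g i = 0 := hg.1.zero_of_numParts_le (by omega)
          omega)
      have hsplit : (Finset.range (n + Δ)).filter (fun i => g' i = 1)
          = ((Finset.range n).filter (fun i => g i = 1)) ∪ Finset.Ico n (n + Δ) := by
        ext i
        simp only [Finset.mem_filter, Finset.mem_range, Finset.mem_union, Finset.mem_Ico]
        constructor
        · rintro ⟨hi, hgi⟩
          rcases Nat.lt_or_ge i n with h | h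
          · left; exact ⟨h, by rw [← hv1 i h]; exact hgi⟩
          · right; exact ⟨h, hi⟩
        · rintro (⟨hi, hgi⟩ | ⟨hi1, hi2⟩)
          · exact ⟨by omega, by rw [hv1 i hi]; exact hgi⟩
          · exact ⟨hi2, hv2 i hi1 hi2⟩
      have hdisj : Disjoint ((Finset.range n).filter (fun i => g i = 1))
          (Finset.Ico n (n + Δ)) := by
        rw [Finset.disjoint_left]
        intro i hi hi2
        simp only [Finset.mem_filter, Finset.mem_range] at hi
        rw [Finset.mem_Ico] at hi2
        omega
      rw [hm', hsplit, Finset.card_union_of_disjoint hdisj, Nat.card_Ico, ← hmg]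
      have h5 := hg.2.2 1 (by exact ⟨0, by omega⟩)
      obtain ⟨x, hx⟩ := h5
      obtain ⟨y, hy⟩ := hΔeven
      exact ⟨x + y, by omega⟩
    · -- p ≥ 2
      have : {i | g' i = p} = {i | g i = p} := by
        ext i
        constructor
        · intro hi
          simp only [Set.mem_setOf_eq] at hi ⊢
          rcases Nat.lt_or_ge i n with h | h
          · rw [← hv1 i h]; exact hi
          · exfalso
            rcases Nat.lt_or_ge i (n + Δ) with h2 | h2
            · rw [hv2 i h h2] at hi; omega
            · rw [hv3 i h2] at hi; omega
        · intro hi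
          simp only [Set.mem_setOf_eq] at hi ⊢
          have hipos : i < n := by
            rw [hn]
            rw [← hg.1.pos_iff i]
            omega
          rw [hv1 i hipos]; exact hi
      rw [mult, this]
      exact hg.2.2 p hp
  exact ⟨g', htc, hdom, hge⟩

end Aux

/-- let `e` be a partition of odd size with an odd number of
parts. Then `∇(B-collapse of e)` equals the C-collapse of `∇(e)`; in
particular the B-collapse of `e` has the same number of parts as `e`. -/
theorem stmt_13 (e : ℕ → ℕ) (he : IsPartition e) (hodd : Odd (size e))
    (hparts : Odd (numParts e)) :
    delCol (collapseB e) = collapseC (delCol e) ∧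
    numParts (collapseB e) = numParts e := by
  classical
  set m := numParts e with hm
  have hm1 : 1 ≤ m := hparts.pos
  have hfpart : IsPartition (delCol e) := he.delCol
  have hpd : ∀ k, psum (delCol e) k + min k m = psum e k := fun k => psum_delCol he k
  have hsz : size (delCol e) + m = size e := size_delCol he
  have hevf : Even (size (delCol e)) := by
    obtain ⟨x, hx⟩ := hodd
    obtain ⟨y, hy⟩ := hparts
    exact ⟨x - y, by omega⟩
  obtain ⟨c, hcCol, hcnp⟩ := existsC hfpart hevf
  have hcC : IsTypeC c := hcCol.1
  have hcpart : IsPartition c := hcC.1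
  have hmc : numParts c ≤ m := by
    rw [hcnp]; exact numParts_delCol_le he
  have hc0 : ∀ i, m ≤ i → c i = 0 := fun i hi =>
    hcpart.zero_of_numParts_le (by omega)
  set b : ℕ → ℕ := fun i => if i < m then c i + 1 else 0 with hbdef
  have hbv1 : ∀ i, i < m → b i = c i + 1 := fun i hi => if_pos hi
  have hbv2 : ∀ i, m ≤ i → b i = 0 := fun i hi => if_neg (by omega)
  have hpb : ∀ k, psum b k = psum c k + min k m := by
    intro k
    induction k with
    | zero => simp [psum]
    | succ k ih =>
      rw [psum_succ, psum_succ]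
      rcases Nat.lt_or_ge k m with h | h
      · rw [hbv1 k h]; omega
      · rw [hbv2 k h]
        have := hc0 k h
        omega
  have hbpos : ∀ i, 0 < b i ↔ i < m := by
    intro i
    rcases Nat.lt_or_ge i m with h | h
    · rw [hbv1 i h]; omega
    · rw [hbv2 i h]; omega
  have hbpart : IsPartition b := by
    refine ⟨antitone_nat_of_succ_le fun i => ?_, m, fun i hi => hbv2 i hi⟩
    rcases Nat.lt_or_ge (i+1) m with h | h
    · rw [hbv1 _ h, hbv1 _ (by omega)]
      have : c (i+1) ≤ c i := hcpart.1 (by omega : i ≤ i+1)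
      omega
    · rw [hbv2 _ h]
      omega
  have hbnp : numParts b = m := numParts_spec hbpos
  have hcsz : size c = size (delCol e) := hcCol.2.1.1
  have hbsz : size b = size e := by
    have h1 : size b = psum b m := hbpart.size_eq_psum_of_le (by omega)
    have h2 : psum c m = size c := by
      rw [hcpart.size_eq_psum_of_le (k := m) (by omega)]
    have h3 := hpb m
    omega
  -- b is type B
  have hbB : IsTypeB b := by
    refine ⟨hbpart, by rw [hbsz]; exact hodd, ?_⟩
    intro p hppos hpev
    have hp2 : 2 ≤ p := by
      obtain ⟨t, ht⟩ := hpev; omega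
    have hset : {i | b i = p} = {i | c i = p - 1} := by
      ext i
      simp only [Set.mem_setOf_eq]
      constructor
      · intro hi
        rcases Nat.lt_or_ge i m with h | h
        · rw [hbv1 i h] at hi; omega
        · rw [hbv2 i h] at hi; omega
      · intro hi
        have hpos : 0 < c i := by omega
        have him : i < m := by
          have := (hcpart.pos_iff i).1 hpos
          omega
        rw [hbv1 i him]; omega
    have : mult b p = mult c (p - 1) := by
      rw [mult, mult, hset]
    rw [this]
    refine hcC.2.2 (p-1) ?_
    obtain ⟨t, ht⟩ := hpev
    exact ⟨t - 1, by omega⟩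
  have hbdom : Dom b e := by
    refine ⟨hbsz, fun k => ?_⟩
    have h1 := hpb k
    have h2 := hcCol.2.1.2 k
    have h3 := hpd k
    omega
  -- maximality of b
  have hbmax : ∀ b', IsTypeB b' → Dom b' e → Dom b' b := by
    intro b' hb' hdom'
    have hb'part : IsPartition b' := hb'.1
    set m' := numParts b' with hm'
    have hm'ge : m ≤ m' := by
      by_contra hcon
      push_neg at hcon
      have h1 : size b' = psum b' m' := hb'part.size_eq_psum_of_le le_rfl
      have h2 := hdom'.2 m'
      have h3 := he.psum_add_le (le_of_lt hcon) (le_refl m)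
      have h4 := he.psum_le_size' m
      have h5 := hdom'.1
      omega
    have hgC : IsTypeC (delCol b') := hb'.delCol_typeC
    have hpg : ∀ k, psum (delCol b') k + min k m' = psum b' k := fun k => psum_delCol hb'part k
    have hgle : ∀ k, psum (delCol b') k ≤ psum (delCol e) k := by
      intro k
      have h1 := hpg k
      have h2 := hpd k
      have h3 := hdom'.2 k
      omega
    obtain ⟨g', hg'C, hg'dom, hg'ge⟩ := pad hfpart hevf hgC hgle
    have hg'c : Dom g' c := hcCol.2.2 g' hg'C hg'dom
    have hgc : ∀ k, psum (delCol b') k ≤ psum c k := fun k =>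
      le_trans (hg'ge k) (hg'c.2 k)
    refine ⟨hdom'.1.trans hbsz.symm, fun k => ?_⟩
    rcases Nat.lt_or_ge k (m+1) with h | h
    · have h1 := hpg k
      have h2 := hgc k
      have h3 := hpb k
      omega
    · have h1 : psum b k = size b := by
        rw [hbpart.size_eq_psum_of_le (k := k) (by omega)]
      have h2 := hb'part.psum_le_size' k
      have h3 := hdom'.1
      omega
  have hBcol : IsCollapse IsTypeB e b := ⟨hbB, hbdom, hbmax⟩
  have hcolB : collapseB e = b := collapse_unique hBcol
  have hcolC : collapseC (delCol e) = c := collapse_unique hcCol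
  constructor
  · rw [hcolB, hcolC]
    funext i
    show b i - 1 = c i
    rcases Nat.lt_or_ge i m with h | h
    · rw [hbv1 i h]; omega
    · rw [hbv2 i h]
      have := hc0 i h
      omega
  · rw [hcolB, hbnp]
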